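/- arXiv:2210.09635 — 6 statements merged into one kernel-verified Lean document; each statement's English description precedes it below -/
import Mathlib

section
/- Let n > 4 be a composite natural number, let p be the least prime divisor of n, and set m = C(2p+1, 3) (the binomial coefficient). Then the spread of the alternating group A_n is at most m: there exist m + 1 nontrivial elements x₁, …, x_{m+1} ∈ A_n such that no single y ∈ A_n satisfies ⟨x_i,y⟩ = A_n for all i. -/
/-!
Fix a set `Ω` of `2p + 1` points and take one 3-cycle on each 3-subset of `Ω`. Every `y ∈ Aₙ`
preserves a partition of `Fin n` into at most `p` blocks, none of them everything: a `y`-orbit and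
its complement if `y` is intransitive, the `p` cycles (of length `n / p`) of `y ^ p` if `y` is an
`n`-cycle. By pigeonhole three points of `Ω` lie in one block; the 3-cycle on them and `y` both
preserve the partition, so they generate a proper subgroup of `Aₙ`.
-/

open Equiv Equiv.Perm Finset

lemma Subgroup.closure_pair_ne_top_of_not_le {G : Type*} [Group G] {H K : Subgroup G} {x y : K}
    (hx : (x : G) ∈ H) (hy : (y : G) ∈ H) (hKH : ¬ K ≤ H) : closure {x, y} ≠ ⊤ := by
  intro h
  apply hKH
  rw [← subgroupOf_eq_top, eq_top_iff, ← h, closure_le]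
  simp [Set.insert_subset_iff, mem_subgroupOf, hx, hy]

lemma Setoid.exists_subset_card_eq_three_rel {α : Type*} {r : Setoid α} [Finite (Quotient r)]
    (Ω : Finset α) (hΩ : Nat.card (Quotient r) * 2 < #Ω) :
    ∃ t ⊆ Ω, #t = 3 ∧ ∀ u ∈ t, ∀ v ∈ t, r u v := by
  classical
  have := Fintype.ofFinite (Quotient r)
  obtain ⟨c, -, hc⟩ := exists_lt_card_fiber_of_mul_lt_card_of_maps_to
    (f := Quotient.mk r) (t := univ) (fun _ _ => mem_univ _)
    (by rwa [card_univ, ← Nat.card_eq_fintype_card])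
  obtain ⟨t, htc, ht⟩ := exists_subset_card_eq hc
  refine ⟨t, htc.trans (filter_subset _ _), ht, fun u hu v hv => Quotient.exact ?_⟩
  rw [(mem_filter.1 (htc hu)).2, (mem_filter.1 (htc hv)).2]

lemma Fintype.exists_surjective_fin_of_card_le {β : Type*} [Fintype β] [Nonempty β] {k : ℕ}
    (h : Fintype.card β ≤ k) : ∃ f : Fin k → β, Function.Surjective f := by
  obtain ⟨e⟩ :=
    Function.Embedding.nonempty_of_card_le (by simpa using h : card β ≤ card (Fin k))
  exact ⟨Function.invFun e, Function.invFun_surjective e.injective⟩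

lemma Nat.two_mul_minFac_add_one_le {n : ℕ} (hn : 4 < n) (hcomp : ¬ n.Prime) :
    2 * n.minFac + 1 ≤ n := by
  have hsq := minFac_sq_le_self (by omega) hcomp
  have h2 := (minFac_prime (show n ≠ 1 by omega)).two_le
  rcases h2.eq_or_lt with h | h
  · omega
  · nlinarith

namespace Equiv.Perm

variable {α : Type*}

def setoidStabilizer (r : Setoid α) : Subgroup (Perm α) where
  carrier := {g | ∀ a b, r (g a) (g b) ↔ r a b}
  one_mem' _ _ := Iff.rfl
  mul_mem' hg hh a b := (hg _ _).trans (hh a b)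
  inv_mem' {g} hg a b := by simpa using (hg (g⁻¹ a) (g⁻¹ b)).symm

variable {r : Setoid α} {g : Perm α}

lemma mem_setoidStabilizer_of_forall_rel_apply (h : ∀ a, r a (g a)) :
    g ∈ setoidStabilizer r := fun a b =>
  ⟨fun hab => r.trans (h a) (r.trans hab (r.symm (h b))),
    fun hab => r.trans (r.symm (h a)) (r.trans hab (h b))⟩

lemma mem_setoidStabilizer_sameCycle_of_commute {f : Perm α} (h : Commute g f) :
    g ∈ setoidStabilizer (SameCycle.setoid f) := fun a b => by
  have hconj : g * f * g⁻¹ = f := by rw [h.eq, mul_inv_cancel_right]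
  show f.SameCycle (g a) (g b) ↔ f.SameCycle a b
  simpa [hconj] using sameCycle_conj (g := g) (f := f) (x := g a) (y := g b)

lemma swap_mul_swap_notMem_setoidStabilizer [DecidableEq α] {a b c d : α} (hab : a ≠ b)
    (hac : a ≠ c) (hrab : r a b) (hrac : r a c) (hrad : ¬ r a d) :
    swap a d * swap b c ∉ setoidStabilizer r := by
  intro h
  have hdb : b ≠ d := by rintro rfl; exact hrad hrab
  have hdc : c ≠ d := by rintro rfl; exact hrad hrac
  have hrdc : r d c := by
    simpa [swap_apply_of_ne_of_ne hab hac, swap_apply_of_ne_of_ne hac.symm hdc] using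
      (h a b).2 hrab
  exact hrad (r.trans hrac (r.symm hrdc))

lemma formPerm_toList_mem_setoidStabilizer [DecidableEq α] {t : Finset α}
    (htr : ∀ u ∈ t, ∀ v ∈ t, r u v) :
    t.toList.formPerm ∈ setoidStabilizer r := by
  refine mem_setoidStabilizer_of_forall_rel_apply fun u => ?_
  by_cases hu : u ∈ t
  · exact htr u hu _ (t.mem_toList.1 (List.formPerm_apply_mem_of_mem (t.mem_toList.2 hu)))
  · rw [List.formPerm_apply_of_notMem (by simpa using hu)]

section Finite

variable [Fintype α] [DecidableEq α]

lemma alternatingGroup_not_le_setoidStabilizer {t : Finset α} (ht : #t = 3)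
    (htr : ∀ u ∈ t, ∀ v ∈ t, r u v) (hproper : ∀ a, ∃ d, ¬ r a d) :
    ¬ alternatingGroup α ≤ setoidStabilizer r := by
  obtain ⟨a, b, c, hab, hac, hbc, rfl⟩ := card_eq_three.1 ht
  obtain ⟨d, hrad⟩ := hproper a
  have had : a ≠ d := fun h => hrad (h ▸ r.refl a)
  intro hle
  refine swap_mul_swap_notMem_setoidStabilizer hab hac (htr a (by simp) b (by simp))
    (htr a (by simp) c (by simp)) hrad (hle ?_)
  simp [mem_alternatingGroup, sign_swap had, sign_swap hbc]

lemma isThreeCycle_formPerm_toList {t : Finset α} (ht : #t = 3) :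
    IsThreeCycle t.toList.formPerm := by
  have hsingle : ∀ x, t.toList ≠ [x] := fun x h => by
    simpa [ht] using congrArg List.length h
  rw [← card_support_eq_three_iff, List.support_formPerm_of_nodup _ t.nodup_toList hsingle,
    toList_toFinset, ht]

lemma orderOf_eq_card_of_forall_sameCycle [Nontrivial α] {y : Perm α}
    (h : ∀ a b, y.SameCycle a b) : orderOf y = Fintype.card α := by
  have hmoved : ∀ a, y a ≠ a := fun a ha => by
    obtain ⟨b, hb⟩ := exists_ne a
    obtain ⟨i, rfl⟩ := h a b
    exact hb (zpow_apply_eq_self_of_apply_eq_self ha i)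
  obtain ⟨a, -⟩ := exists_pair_ne α
  have hcycle : IsCycle y := ⟨a, hmoved a, fun b _ => h a b⟩
  rw [hcycle.orderOf, eq_univ_of_forall fun b => mem_support.2 (hmoved b), card_univ]

lemma exists_setoid_mem_setoidStabilizer_of_forall_sameCycle [Nonempty α] {y : Perm α}
    (h : ∀ a b, y.SameCycle a b) {p : ℕ} (hp : 1 < p) (hpn : p ∣ Fintype.card α) :
    ∃ r : Setoid α, y ∈ setoidStabilizer r ∧ Nat.card (Quotient r) ≤ p ∧
      ∀ a, ∃ d, ¬ r a d := by
  obtain ⟨o⟩ := ‹Nonempty α›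
  have hcard : 0 < Fintype.card α := Fintype.card_pos
  have : Nontrivial α := Fintype.one_lt_card_iff_nontrivial.1 (by
    have := Nat.le_of_dvd hcard hpn; omega)
  obtain ⟨q, hq⟩ := hpn
  have hq0 : 0 < q := Nat.pos_of_ne_zero (by rintro rfl; omega)
  have hpow : (y ^ p) ^ q = 1 := by
    rw [← pow_mul, ← hq, ← orderOf_eq_card_of_forall_sameCycle h, pow_orderOf_eq_one]
  refine ⟨SameCycle.setoid (y ^ p), mem_setoidStabilizer_sameCycle_of_commute
    (Commute.self_pow y p), ?_, fun a => ?_⟩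
  · have hsurj : Function.Surjective
        (fun k : Fin p => (⟦(y ^ (k : ℕ)) o⟧ : Quotient (SameCycle.setoid (y ^ p)))) := by
      rintro ⟨u⟩
      obtain ⟨i, rfl⟩ := (h o u).exists_nat_pow_eq
      refine ⟨⟨i % p, Nat.mod_lt _ (by omega)⟩,
        Quotient.sound ⟨((i / p : ℕ) : ℤ), ?_⟩⟩
      rw [zpow_natCast, ← mul_apply, ← pow_mul, ← pow_add, Nat.div_add_mod]
    simpa using Nat.card_le_card_of_surjective _ hsurj
  · by_contra! hall
    have hsurj : Function.Surjective (fun k : Fin (orderOf (y ^ p)) => ((y ^ p) ^ (k : ℕ)) a) :=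
      fun d => (hall d).exists_fin_pow_eq
    have h1 := Fintype.card_le_of_surjective _ hsurj
    have h2 := orderOf_le_of_pow_eq_one hq0 hpow
    simp only [Fintype.card_fin] at h1
    have : q < p * q := lt_mul_left hq0 hp
    omega

lemma exists_setoid_mem_setoidStabilizer_of_not_forall_sameCycle {y : Perm α}
    (h : ¬ ∀ a b, y.SameCycle a b) :
    ∃ r : Setoid α, y ∈ setoidStabilizer r ∧ Nat.card (Quotient r) ≤ 2 ∧
      ∀ a, ∃ d, ¬ r a d := by
  push Not at h
  obtain ⟨o, d, hod⟩ := h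
  refine ⟨Setoid.ker (y.SameCycle o), mem_setoidStabilizer_of_forall_rel_apply fun a => ?_, ?_,
    fun a => ?_⟩
  · exact (propext sameCycle_apply_right).symm
  · calc Nat.card (Quotient (Setoid.ker (y.SameCycle o)))
        ≤ Nat.card Prop := Nat.card_le_card_of_injective _ (Setoid.kerLift_injective _)
      _ = 2 := by simp
  · by_cases ha : y.SameCycle o a
    · exact ⟨d, fun hr => hod (cast hr ha)⟩
    · exact ⟨o, fun hr => ha (cast hr.symm (SameCycle.refl _ _))⟩

lemma exists_setoid_mem_setoidStabilizer [Nonempty α] (y : Perm α) {p : ℕ} (hp : 1 < p)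
    (hpn : p ∣ Fintype.card α) :
    ∃ r : Setoid α, y ∈ setoidStabilizer r ∧ Nat.card (Quotient r) ≤ p ∧
      ∀ a, ∃ d, ¬ r a d := by
  by_cases h : ∀ a b, y.SameCycle a b
  · exact exists_setoid_mem_setoidStabilizer_of_forall_sameCycle h hp hpn
  · obtain ⟨r, hy, hr, hproper⟩ := exists_setoid_mem_setoidStabilizer_of_not_forall_sameCycle h
    exact ⟨r, hy, hr.trans hp, hproper⟩

end Finite

end Equiv.Perm

/-- For composite `n > 4` with least prime divisor `p`, the spread of `Aₙ` is at most
`(2p+1).choose 3`: there are `m + 1` nontrivial elements with no common generating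
partner, where `m = (2p+1).choose 3`. -/
theorem alternating_spread_upper_bound (n p m : ℕ) (hn : 4 < n) (hcomp : ¬ n.Prime)
    (hp : p = n.minFac) (hm : m = (2 * p + 1).choose 3) :
    ∃ x : Fin (m + 1) → alternatingGroup (Fin n),
      (∀ i, x i ≠ 1) ∧
      ¬ ∃ y : alternatingGroup (Fin n), ∀ i,
        Subgroup.closure {x i, y} = (⊤ : Subgroup (alternatingGroup (Fin n))) := by
  have hpn : p ∣ Fintype.card (Fin n) := by simpa [hp] using Nat.minFac_dvd n
  have hp1 : 1 < p := hp ▸ (Nat.minFac_prime (by omega)).one_lt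
  obtain ⟨Ω, -, hΩ⟩ := exists_subset_card_eq (s := (univ : Finset (Fin n))) (n := 2 * p + 1)
    (by rw [card_univ, Fintype.card_fin, hp]; exact Nat.two_mul_minFac_add_one_le hn hcomp)
  have : Nonempty (Ω.powersetCard 3) := (powersetCard_nonempty.2 (by omega)).to_subtype
  obtain ⟨f, hf⟩ := Fintype.exists_surjective_fin_of_card_le (β := Ω.powersetCard 3)
    (k := m + 1) (by rw [Fintype.card_coe, card_powersetCard, hΩ, hm]; omega)
  have hf3 (i : Fin (m + 1)) : #(f i : Finset (Fin n)) = 3 := (mem_powersetCard.1 (f i).2).2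
  refine ⟨fun i => ⟨(f i : Finset (Fin n)).toList.formPerm,
    (isThreeCycle_formPerm_toList (hf3 i)).mem_alternatingGroup⟩,
    fun i h => (isThreeCycle_formPerm_toList (hf3 i)).ne_one (congrArg Subtype.val h), ?_⟩
  rintro ⟨y, hy⟩
  have : Nonempty (Fin n) := ⟨⟨0, by omega⟩⟩
  obtain ⟨r, hyr, hr, hproper⟩ := exists_setoid_mem_setoidStabilizer (y : Perm (Fin n)) hp1 hpn
  obtain ⟨t, htΩ, ht, htr⟩ := Setoid.exists_subset_card_eq_three_rel (r := r) Ω (by omega)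
  obtain ⟨i, hi⟩ := hf ⟨t, mem_powersetCard.2 ⟨htΩ, ht⟩⟩
  refine Subgroup.closure_pair_ne_top_of_not_le ?_ hyr
    (alternatingGroup_not_le_setoidStabilizer ht htr hproper) (hy i)
  simpa [hi] using formPerm_toList_mem_setoidStabilizer htr
end

section
/- Let G be a finite group and let x, s ∈ G. Then Q(x,s) ≤ ∑_{H ∈ ℳ(G,s)} |x^G ∩ H| / |x^G|, where the sum is over the (finitely many) maximal subgroups H of G containing s, x^G denotes the conjugacy class of x, and the inequality is between rational numbers. -/
/-!
The map `g ↦ g s g⁻¹` pushes the uniform distribution on `G` forward to the uniform distribution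
on `sᴳ`, its fibres being cosets of the centralizer of `s`; so both `Q(x,s)` and the fixed point
ratios are proportions of elements `g ∈ G`. If `⟨x, g s g⁻¹⟩ ≤ H` with `H` maximal, then
`g⁻¹ H g` is a maximal subgroup containing `s` and `g⁻¹ x g`, and a union bound over the maximal
subgroups containing `s` finishes the proof.
-/

open MulAction Pointwise

instance ConjAct.instFinite {G : Type*} [Finite G] : Finite (ConjAct G) :=
  inferInstanceAs (Finite G)

namespace MulAction

variable {G α : Type*} [Group G] [MulAction G α]

theorem card_orbit_inter_mul_card_stabilizer (a : α) (S : Set α) :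
    Nat.card ↥(orbit G a ∩ S) * Nat.card (stabilizer G a) = Nat.card {g : G | g • a ∈ S} := by
  have hpre : {g : G | g • a ∈ S} = QuotientGroup.mk ⁻¹'
      ((orbitEquivQuotientStabilizer G a).symm ⁻¹' (Subtype.val ⁻¹' S)) := rfl
  rw [hpre, QuotientGroup.card_preimage_mk, mul_comm, ← Subtype.image_preimage_coe,
    Nat.card_image_of_injective Subtype.val_injective,
    Nat.card_preimage_of_injective (Equiv.injective _) (by simp)]

theorem card_orbit_inter_div_card_orbit {K : Type*} [Semifield K] [CharZero K] [Finite G]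
    (a : α) (S : Set α) :
    (Nat.card ↥(orbit G a ∩ S) : K) / Nat.card (orbit G a) =
      Nat.card {g : G | g • a ∈ S} / Nat.card G := by
  have horbit := card_orbit_inter_mul_card_stabilizer (G := G) a Set.univ
  simp only [Set.inter_univ, Set.mem_univ, Set.ofPred_true, Nat.card_univ] at horbit
  rw [← card_orbit_inter_mul_card_stabilizer, ← horbit, Nat.cast_mul, Nat.cast_mul,
    mul_div_mul_right]
  exact_mod_cast Nat.card_pos.ne'

end MulAction

theorem card_isConj_and_div_card_isConj {K : Type*} [Semifield K] [CharZero K]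
    {G : Type*} [Group G] [Finite G] (s : G) (P : G → Prop) :
    (Nat.card {y | IsConj s y ∧ P y} : K) / Nat.card {y | IsConj s y} =
      Nat.card {g : ConjAct G | P (g • s)} / Nat.card G := by
  have hconj (y : G) : IsConj s y ↔ y ∈ orbit (ConjAct G) s :=
    isConj_comm.trans ConjAct.mem_orbit_conjAct.symm
  have hnum : {y | IsConj s y ∧ P y} = orbit (ConjAct G) s ∩ {y | P y} :=
    Set.ext fun y => and_congr_left' (hconj y)
  have hden : {y | IsConj s y} = orbit (ConjAct G) s := Set.ext hconj
  rw [hnum, hden, ← Nat.card_congr (ConjAct.ofConjAct (G := G)).toEquiv]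
  exact card_orbit_inter_div_card_orbit s {y | P y}

namespace Subgroup

theorem isCoatom_pointwise_smul_iff {α G : Type*} [Group α] [Group G]
    [MulDistribMulAction α G] {a : α} {H : Subgroup G} :
    IsCoatom (a • H) ↔ IsCoatom H :=
  OrderIso.isCoatom_iff ⟨MulAction.toPerm a, pointwise_smul_le_pointwise_smul_iff⟩ H

theorem card_setOf_closure_pair_smul_ne_top_le {G : Type*} [Group G] [Finite G] (x s : G) :
    Nat.card {g : ConjAct G | closure {x, g • s} ≠ ⊤} ≤
      ∑ᶠ K ∈ {K : Subgroup G | IsCoatom K ∧ s ∈ K}, Nat.card {g : ConjAct G | g • x ∈ K} := by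
  have hcover : {g : ConjAct G | closure {x, g • s} ≠ ⊤} ⊆
      (⋃ K ∈ {K : Subgroup G | IsCoatom K ∧ s ∈ K}, {g : ConjAct G | g • x ∈ K})⁻¹ := by
    intro g hg
    obtain ⟨H, hH, hle⟩ := (eq_top_or_exists_le_coatom _).resolve_left hg
    rw [Set.mem_inv, Set.mem_iUnion₂]
    refine ⟨g⁻¹ • H, ⟨isCoatom_pointwise_smul_iff.2 hH, ?_⟩, ?_⟩
    · exact mem_inv_pointwise_smul_iff.2 (hle (subset_closure (by simp)))
    · exact smul_mem_pointwise_smul_iff.2 (hle (subset_closure (by simp)))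
  simp only [Nat.card_coe_set_eq]
  calc _ ≤ _ := Set.ncard_le_ncard hcover (Set.toFinite _)
    _ = _ := Set.ncard_inv _
    _ ≤ _ := (Set.toFinite _).ncard_biUnion_le _

end Subgroup

/-- For a finite group `G` and `x, s ∈ G`, the probability `Q(x,s)` that a uniformly
random conjugate of `s` fails to generate `G` with `x` is at most the sum over the
maximal subgroups `H` of `G` containing `s` of the fixed point ratios `|xᴳ ∩ H|/|xᴳ|`. -/
theorem Q_le_sum_fixed_point_ratios (G : Type*) [Group G] [Fintype G] (x s : G) :
    (Nat.card {y : G | IsConj s y ∧ Subgroup.closure {x, y} ≠ ⊤} : ℚ) /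
        (Nat.card {y : G | IsConj s y} : ℚ) ≤
      ∑ᶠ H ∈ {H : Subgroup G | IsCoatom H ∧ s ∈ H},
        (Nat.card {z : G | IsConj x z ∧ z ∈ H} : ℚ) /
          (Nat.card {z : G | IsConj x z} : ℚ) := by
  rw [card_isConj_and_div_card_isConj s (fun y => Subgroup.closure {x, y} ≠ ⊤),
    finsum_mem_congr rfl fun H _ => card_isConj_and_div_card_isConj x (· ∈ H)]
  simp_rw [div_eq_mul_inv, ← finsum_mem_mul, ← Nat.cast_finsum_mem (Set.toFinite _)]
  gcongr
  exact Subgroup.card_setOf_closure_pair_smul_ne_top_le x s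
end

section
/- Let G be a finite group, let s ∈ G and let k be a positive integer. If Q(x,s) < 1/k for every element x ∈ G of prime order, then for any k nontrivial elements x₁, …, x_k ∈ G there exists a conjugate y of s such that ⟨x₁,y⟩ = ⋯ = ⟨x_k,y⟩ = G; that is, the uniform spread of G is at least k, witnessed by the conjugacy class of s. -/
/-!
Each `xᵢ ≠ 1` has a power `zᵢ` of prime order, and a conjugate `y` of `s` generating `G` together
with `zᵢ` also generates it together with `xᵢ`. For each `i` fewer than a `1/k`-th of the
conjugates of `s` fail to generate `G` with `zᵢ`, so by the union bound some conjugate fails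
for no `i`.
-/

theorem IsOfFinOrder.exists_orderOf_pow_prime {M : Type*} [Monoid M] {x : M}
    (hx : IsOfFinOrder x) (hx1 : x ≠ 1) : ∃ n : ℕ, (orderOf (x ^ n)).Prime := by
  obtain ⟨p, hp, hdvd⟩ := Nat.exists_prime_and_dvd (orderOf_eq_one_iff.not.2 hx1)
  exact ⟨orderOf x / p, (orderOf_pow_orderOf_div hx.orderOf_pos.ne' hdvd).symm ▸ hp⟩

theorem Subgroup.closure_pair_eq_top_of_pow {G : Type*} [Group G] {x y : G} (n : ℕ)
    (h : closure {x ^ n, y} = ⊤) : closure {x, y} = ⊤ := by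
  rw [eq_top_iff, ← h, closure_le]
  rintro w (rfl | rfl)
  · exact pow_mem (subset_closure (Set.mem_insert _ _)) _
  · exact subset_closure (Set.mem_insert_of_mem _ rfl)

theorem Nat.mul_lt_of_cast_div_lt_one_div {K : Type*} [Field K] [LinearOrder K]
    [IsStrictOrderedRing K] {a b k : ℕ} (hb : 0 < b) (h : (a : K) / b < 1 / k) : k * a < b := by
  rcases k.eq_zero_or_pos with rfl | hk
  · rw [Nat.cast_zero, div_zero] at h
    exact absurd h (not_lt.2 (by positivity))
  · rw [div_lt_div_iff₀ (by positivity) (by positivity), one_mul] at h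
    rw [mul_comm]
    exact_mod_cast h

theorem Fintype.sum_lt_of_forall_card_mul_lt {ι : Type*} [Fintype ι] {f : ι → ℕ} {c : ℕ}
    (h : ∀ i, Fintype.card ι * f i < c) (hc : 0 < c) : ∑ i, f i < c := by
  rcases isEmpty_or_nonempty ι with hι | hι
  · simpa using hc
  refine Nat.lt_of_mul_lt_mul_left (a := Fintype.card ι) ?_
  calc Fintype.card ι * ∑ i, f i = ∑ i, Fintype.card ι * f i := Finset.mul_sum _ _ _
    _ < ∑ _i : ι, c := Finset.sum_lt_sum_of_nonempty Finset.univ_nonempty fun i _ => h i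
    _ = Fintype.card ι * c := by simp

theorem Set.exists_mem_forall_notMem_of_sum_ncard_lt {α ι : Type*} [Finite α] [Fintype ι]
    {C : Set α} {B : ι → Set α} (h : ∑ i, (B i).ncard < C.ncard) : ∃ y ∈ C, ∀ i, y ∉ B i := by
  obtain ⟨y, hyC, hyB⟩ :=
    exists_mem_notMem_of_ncard_lt_ncard ((ncard_iUnion_le_of_fintype B).trans_lt h)
  exact ⟨y, hyC, fun i hi => hyB (mem_iUnion.2 ⟨i, hi⟩)⟩

theorem uniform_spread_of_Q_lt_general (G : Type*) [Group G] [Fintype G] (s : G) (k : ℕ)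
    (hQ : ∀ x : G, (orderOf x).Prime →
      (Nat.card {y : G | IsConj s y ∧ Subgroup.closure {x, y} ≠ ⊤} : ℚ) /
          (Nat.card {y : G | IsConj s y} : ℚ) < 1 / (k : ℚ)) :
    ∀ x : Fin k → G, (∀ i, x i ≠ 1) →
      ∃ y : G, IsConj s y ∧ ∀ i, Subgroup.closure {x i, y} = ⊤ := by
  intro x hx
  choose n hn using fun i => (isOfFinOrder_of_finite (x i)).exists_orderOf_pow_prime (hx i)
  have hclass : 0 < {y : G | IsConj s y}.ncard := (Set.ncard_pos).2 ⟨s, IsConj.refl s⟩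
  have hbad : ∀ i, Fintype.card (Fin k) *
      {y : G | IsConj s y ∧ Subgroup.closure {x i ^ n i, y} ≠ ⊤}.ncard <
        {y : G | IsConj s y}.ncard := fun i => by
    simpa only [Fintype.card_fin, Nat.card_coe_set_eq] using
      Nat.mul_lt_of_cast_div_lt_one_div hclass (hQ _ (hn i))
  obtain ⟨y, hy, hgood⟩ := Set.exists_mem_forall_notMem_of_sum_ncard_lt
    (Fintype.sum_lt_of_forall_card_mul_lt hbad hclass)
  refine ⟨y, hy, fun i => Subgroup.closure_pair_eq_top_of_pow (n i) ?_⟩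
  by_contra hne
  exact hgood i ⟨hy, hne⟩

/-- If `Q(x,s) < 1/k` for every prime order element `x` of the finite group `G`,
then the uniform spread of `G` is at least `k`, witnessed by the conjugacy class
of `s`. -/
theorem uniform_spread_of_Q_lt (G : Type*) [Group G] [Fintype G] (s : G) (k : ℕ)
    (hk : 0 < k)
    (hQ : ∀ x : G, (orderOf x).Prime →
      (Nat.card {y : G | IsConj s y ∧ Subgroup.closure {x, y} ≠ ⊤} : ℚ) /
          (Nat.card {y : G | IsConj s y} : ℚ) < 1 / (k : ℚ)) :
    ∀ x : Fin k → G, (∀ i, x i ≠ 1) →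
      ∃ y : G, IsConj s y ∧ ∀ i, Subgroup.closure {x i, y} = ⊤ :=
  uniform_spread_of_Q_lt_general G s k hQ
end

section
/- Let G be a finite group and let s ∈ G. (i) If s is contained in exactly one maximal subgroup H of G and H has trivial normal core, then the least cardinality of a uniform dominating set of G contained in the conjugacy class s^G equals the base size b(G, G/H), i.e. the least c such that some c conjugates of H intersect trivially. (ii) If H is any maximal subgroup of G containing s with trivial normal core, then every uniform dominating set of G contained in s^G has cardinality at least b(G, G/H). -/
/-- `S` is a uniform dominating set: every nontrivial element of `G` generates `G`
together with some member of `S`. (Containment of `S` in a conjugacy class is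
imposed separately.) -/
def IsDominatingSet {G : Type*} [Group G] (S : Set G) : Prop :=
  ∀ x : G, x ≠ 1 → ∃ y ∈ S, Subgroup.closure {x, y} = ⊤

/-- The base size `b(G, G/H)`: the least `c` such that some `c` conjugates
`H^{g₁}, …, H^{g_c}` of `H` intersect trivially. -/
noncomputable def baseSize (G : Type*) [Group G] (H : Subgroup G) : ℕ :=
  sInf {c : ℕ | ∃ g : Fin c → G,
    (⨅ i, Subgroup.map (MulAut.conj (g i)⁻¹).toMonoidHom H) = ⊥}

/-!
If `s ∈ H ≠ G`, each conjugate `s^c` lies in the proper subgroup `H^c`. So if `S ⊆ sᴳ` is a uniform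
dominating set, an element lying in `H^c` for every `s^c ∈ S` generates a proper subgroup together
with each member of `S`, hence is trivial: these `|S|` conjugates of `H` form a base. Conversely, if
`H` is the only maximal subgroup containing `s`, then `H^c` is the only one containing `s^c`, so
`⟨x, s^c⟩ = G` whenever `x ∉ H^c`; for a base `H^{c₁} ∩ ⋯ ∩ H^{c_b} = 1` every `x ≠ 1` misses some
`H^{cᵢ}`, and `{s^{c₁}, …, s^{c_b}}` is a uniform dominating set.
-/

namespace Subgroup

variable {G : Type*} [Group G]

lemma mem_map_conj_iff {H : Subgroup G} {c x : G} :
    x ∈ H.map (MulAut.conj c).toMonoidHom ↔ c⁻¹ * x * c ∈ H := by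
  rw [mem_map_equiv, MulAut.conj_symm_apply]

lemma map_conj_ne_top {H : Subgroup G} (hH : H ≠ ⊤) (c : G) :
    H.map (MulAut.conj c).toMonoidHom ≠ ⊤ :=
  (map_eq_top_iff (MulAut.conj c).mapSubgroup).not.mpr hH

lemma isCoatom_map_conj {H : Subgroup G} (hH : IsCoatom H) (c : G) :
    IsCoatom (H.map (MulAut.conj c).toMonoidHom) :=
  ((MulAut.conj c).mapSubgroup.isCoatom_iff H).mpr hH

lemma iInf_eq_bot_of_isDominatingSet {S : Set G} (hS : IsDominatingSet S) (K : S → Subgroup G)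
    (hmem : ∀ y, (y : G) ∈ K y) (hK : ∀ y, K y ≠ ⊤) : ⨅ y, K y = ⊥ := by
  refine eq_bot_iff.mpr fun x hx => mem_bot.mpr (not_not.mp fun hx1 => ?_)
  obtain ⟨y, hy, hgen⟩ := hS x hx1
  refine hK ⟨y, hy⟩ (eq_top_iff.mpr (hgen ▸ (closure_le _).mpr ?_))
  exact Set.insert_subset (mem_iInf.mp hx _) (Set.singleton_subset_iff.mpr (hmem _))

lemma closure_pair_eq_top_of_notMem_map_conj [Finite G] {s : G} {H : Subgroup G}
    (hs : {M : Subgroup G | IsCoatom M ∧ s ∈ M} = {H}) {x : G} (c : G)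
    (hx : x ∉ H.map (MulAut.conj c).toMonoidHom) :
    closure {x, MulAut.conj c s} = ⊤ := by
  by_contra hne
  obtain ⟨M, hM, hle⟩ := (eq_top_or_exists_le_coatom _).resolve_left hne
  have hsM : MulAut.conj c s ∈ M := hle (subset_closure (Set.mem_insert_of_mem _ rfl))
  have hxM : x ∈ M := hle (subset_closure (Set.mem_insert _ _))
  have hMH : M.map (MulAut.conj c⁻¹).toMonoidHom = H := by
    refine Set.eq_of_mem_singleton (hs ▸ ⟨isCoatom_map_conj hM _, mem_map_conj_iff.mpr ?_⟩)
    simpa [mul_assoc] using hsM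
  exact hx (mem_map_conj_iff.mpr (hMH ▸ mem_map_conj_iff.mpr (by simpa [mul_assoc] using hxM)))

lemma isDominatingSet_range_conj [Finite G] {s : G} {H : Subgroup G}
    (hs : {M : Subgroup G | IsCoatom M ∧ s ∈ M} = {H}) {ι : Type*} (c : ι → G)
    (hc : ⨅ i, H.map (MulAut.conj (c i)).toMonoidHom = ⊥) :
    IsDominatingSet (Set.range fun i => MulAut.conj (c i) s) := by
  intro x hx1
  obtain ⟨i, hi⟩ : ∃ i, x ∉ H.map (MulAut.conj (c i)).toMonoidHom := by
    by_contra! hall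
    exact hx1 (mem_bot.mp (hc ▸ mem_iInf.mpr hall))
  exact ⟨_, ⟨i, rfl⟩, closure_pair_eq_top_of_notMem_map_conj hs (c i) hi⟩

end Subgroup

section baseSize

open Subgroup

variable {G : Type*} [Group G]

lemma baseSize_le_card {H : Subgroup G} {ι : Type*} [Fintype ι] (c : ι → G)
    (hc : ⨅ i, H.map (MulAut.conj (c i)).toMonoidHom = ⊥) : baseSize G H ≤ Fintype.card ι := by
  let e := Fintype.equivFin ι
  refine Nat.sInf_le ⟨fun k => (c (e.symm k))⁻¹, ?_⟩
  simp_rw [inv_inv]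
  rwa [e.symm.iInf_comp (g := fun i => H.map (MulAut.conj (c i)).toMonoidHom)]

lemma exists_iInf_map_conj_eq_bot [Finite G] {H : Subgroup G} (hH : H.normalCore = ⊥) :
    ∃ c : Fin (baseSize G H) → G, ⨅ i, H.map (MulAut.conj (c i)).toMonoidHom = ⊥ := by
  let e := Finite.equivFin G
  obtain ⟨c, hc⟩ : baseSize G H ∈ {n : ℕ | ∃ c : Fin n → G,
      (⨅ i, H.map (MulAut.conj (c i)⁻¹).toMonoidHom) = ⊥} := by
    refine Nat.sInf_mem ⟨Nat.card G, fun k => (e.symm k)⁻¹, ?_⟩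
    simp_rw [inv_inv]
    rw [e.symm.iInf_comp (g := fun c => H.map (MulAut.conj c).toMonoidHom), ← hH,
      normalCore_eq_iInf_map_conj]
    rfl
  exact ⟨fun i => (c i)⁻¹, hc⟩

theorem baseSize_le_card_of_isDominatingSet {s : G} {H : Subgroup G} (hH : H ≠ ⊤) (hs : s ∈ H)
    {S : Finset G} (hSs : (S : Set G) ⊆ {y | IsConj s y}) (hS : IsDominatingSet (S : Set G)) :
    baseSize G H ≤ S.card := by
  have (y : (S : Set G)) : ∃ c : G, c * s * c⁻¹ = y := isConj_iff.mp (hSs y.2)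
  choose c hc using this
  have hmem (y : (S : Set G)) : (y : G) ∈ H.map (MulAut.conj (c y)).toMonoidHom :=
    hc y ▸ mem_map_of_mem _ hs
  calc baseSize G H ≤ Fintype.card (S : Set G) :=
        baseSize_le_card c (iInf_eq_bot_of_isDominatingSet hS _ hmem fun y => map_conj_ne_top hH _)
    _ = S.card := by simp

theorem exists_isDominatingSet_card_le_baseSize [Finite G] {s : G} {H : Subgroup G}
    (hs : {M : Subgroup G | IsCoatom M ∧ s ∈ M} = {H}) (hH : H.normalCore = ⊥) :
    ∃ S : Finset G, (S : Set G) ⊆ {y | IsConj s y} ∧ IsDominatingSet (S : Set G) ∧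
      S.card ≤ baseSize G H := by
  classical
  obtain ⟨c, hc⟩ := exists_iInf_map_conj_eq_bot hH
  refine ⟨Finset.univ.image fun i => MulAut.conj (c i) s, ?_, ?_, ?_⟩
  · simp_rw [Finset.coe_image, Finset.coe_univ, Set.image_univ, Set.range_subset_iff]
    exact fun i => isConj_iff.mpr ⟨c i, rfl⟩
  · simpa using isDominatingSet_range_conj hs c hc
  · simpa using Finset.card_image_le (s := Finset.univ) (f := fun i => MulAut.conj (c i) s)

end baseSize

/-- Burness–Harper: (i) if `s` lies in a unique maximal subgroup `H` of the finite
group `G` and `H` has trivial normal core, then the least size of a uniform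
dominating set contained in `sᴳ` equals the base size `b(G, G/H)`; (ii) if `H` is
any corefree maximal subgroup of `G` containing `s`, then every uniform dominating
set contained in `sᴳ` has size at least `b(G, G/H)`. -/
theorem uniform_dominating_sets_and_base_size
    (G : Type*) [Group G] [Finite G] (s : G) (H : Subgroup G) :
    (({H' : Subgroup G | IsCoatom H' ∧ s ∈ H'} = {H}) → H.normalCore = ⊥ →
      sInf {c : ℕ | ∃ S : Finset G, (↑S : Set G) ⊆ {y : G | IsConj s y} ∧
        IsDominatingSet (↑S : Set G) ∧ S.card = c} = baseSize G H) ∧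
    (IsCoatom H → s ∈ H → H.normalCore = ⊥ →
      ∀ S : Finset G, (↑S : Set G) ⊆ {y : G | IsConj s y} →
        IsDominatingSet (↑S : Set G) → baseSize G H ≤ S.card) := by
  refine ⟨fun huniq hcore => ?_, fun hmax hs _ S => baseSize_le_card_of_isDominatingSet hmax.1 hs⟩
  obtain ⟨hmax, hs⟩ : IsCoatom H ∧ s ∈ H := huniq.ge rfl
  obtain ⟨S, hSs, hS, hcard⟩ := exists_isDominatingSet_card_le_baseSize huniq hcore
  refine le_antisymm (le_trans (Nat.sInf_le ⟨S, hSs, hS, rfl⟩) hcard) ?_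
  refine le_csInf ⟨_, S, hSs, hS, rfl⟩ ?_
  rintro _ ⟨S', hS's, hS', rfl⟩
  exact baseSize_le_card_of_isDominatingSet hmax.1 hs hS's hS'
end

section
/- Let G be an infinite residually finite group such that every proper quotient of G is cyclic, i.e. for every nontrivial normal subgroup N of G the quotient G/N is cyclic. Then G is cyclic. -/
/-!
A nontrivial commutator survives in some finite quotient `G ⧸ N`, and `N ≠ 1` because `G` is
infinite; as `G ⧸ N` is cyclic, `G` is abelian. If `G ⧸ ⟨x⟩` were infinite for some `x ≠ 1`,
take a prime `p` dividing the order of `x` (any prime if `x` has infinite order). Then `G ⧸ G^p`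
is cyclic of exponent `p` and the image of `x` in it is nontrivial, so it generates; hence every
element of the infinite cyclic group `G ⧸ ⟨x⟩` would be a `p`-th power. So each `⟨x⟩` has finite
index. This forces `G` to be torsion-free, and a torsion-free abelian group with a cyclic
subgroup of finite index `n` embeds into that subgroup by `g ↦ g ^ n`.
-/

open Subgroup

theorem Subgroup.ne_bot_of_finiteIndex {G : Type*} [Group G] [Infinite G] (N : Subgroup G)
    [N.FiniteIndex] : N ≠ ⊥ := by
  rintro rfl
  exact FiniteIndex.index_ne_zero (H := (⊥ : Subgroup G))
    (by rw [index_bot, Nat.card_eq_zero_of_infinite])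

theorem mul_comm_of_residuallyFinite {G : Type*} [Group G] [Infinite G]
    (hrf : ∀ x : G, x ≠ 1 → ∃ N : Subgroup G, N.Normal ∧ N.FiniteIndex ∧ x ∉ N)
    (hcomm : ∀ (N : Subgroup G) [N.Normal], N ≠ ⊥ → ∀ a b : G ⧸ N, a * b = b * a)
    (a b : G) : a * b = b * a := by
  rw [← commutatorElement_eq_one_iff_mul_comm]
  by_contra hab
  obtain ⟨N, hN, _, habN⟩ := hrf _ hab
  apply habN
  rw [← QuotientGroup.eq_one_iff, ← QuotientGroup.mk'_apply, map_commutatorElement,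
    commutatorElement_eq_one_iff_mul_comm]
  exact hcomm N N.ne_bot_of_finiteIndex _ _

section InfiniteCyclic

variable {C : Type*} [Group C] [IsCyclic C] [Infinite C]

theorem IsCyclic.isMulTorsionFree_of_infinite : IsMulTorsionFree C :=
  Function.Injective.isMulTorsionFree (intCyclicMulEquiv (G := C)).symm.toMonoidHom
    (intCyclicMulEquiv (G := C)).symm.injective

theorem IsCyclic.exists_forall_pow_ne_of_infinite {p : ℕ} (hp : p ≠ 1) :
    ∃ c : C, ∀ b : C, b ^ p ≠ c := by
  refine ⟨intCyclicMulEquiv (Multiplicative.ofAdd 1), fun b hb => ?_⟩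
  obtain ⟨k, rfl⟩ := (intCyclicMulEquiv (G := C)).surjective b
  rw [← map_pow, (intCyclicMulEquiv (G := C)).injective.eq_iff] at hb
  have hk : (p : ℤ) * k.toAdd = 1 := by simpa using congrArg Multiplicative.toAdd hb
  have : p ∣ 1 := by exact_mod_cast Dvd.intro _ hk
  exact hp (Nat.dvd_one.mp this)

end InfiniteCyclic

theorem IsCyclic.zpowers_eq_top_of_forall_pow_eq_one {Q : Type*} [Group Q] [IsCyclic Q] {p : ℕ}
    (hp : p.Prime) (hexp : ∀ y : Q, y ^ p = 1) {u : Q} (hu : u ≠ 1) : zpowers u = ⊤ := by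
  have : Fact p.Prime := ⟨hp⟩
  have hdvd : Nat.card Q ∣ p :=
    IsCyclic.exponent_eq_card (α := Q) ▸ Monoid.exponent_dvd_of_forall_pow_eq_one hexp
  rcases (Nat.dvd_prime hp).mp hdvd with hone | hcard
  · exact absurd ((Nat.card_eq_one_iff_unique.mp hone).1.allEq u 1) hu
  · exact zpowers_eq_top_of_prime_card hcard hu

section CommGroup

variable {G : Type*} [CommGroup G]

theorem range_powMonoidHom_ne_bot {p : ℕ} (hp : p ≠ 0) (N : Subgroup G) [IsCyclic (G ⧸ N)]
    [Infinite (G ⧸ N)] : (powMonoidHom p : G →* G).range ≠ ⊥ := by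
  have := IsCyclic.isMulTorsionFree_of_infinite (C := G ⧸ N)
  intro hbot
  obtain ⟨y, hy⟩ := exists_ne (1 : G ⧸ N)
  induction y using QuotientGroup.induction_on with | _ a => ?_
  have ha : a ^ p = 1 := by rw [← mem_bot, ← hbot]; exact ⟨a, rfl⟩
  exact hy ((pow_eq_one_iff_left hp).mp (by rw [← QuotientGroup.mk_pow, ha]; rfl))

theorem notMem_range_powMonoidHom {p : ℕ} (hp : p.Prime) {x : G} (hx : p ∣ orderOf x)
    [IsMulTorsionFree (G ⧸ zpowers x)] : x ∉ (powMonoidHom p : G →* G).range := by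
  rintro ⟨b, hb⟩
  have hbx : (b : G ⧸ zpowers x) ^ p = 1 := by
    rw [← QuotientGroup.mk_pow, QuotientGroup.eq_one_iff]
    exact hb ▸ mem_zpowers x
  obtain ⟨n, rfl⟩ := mem_zpowers_iff.mp
    ((QuotientGroup.eq_one_iff _).mp ((pow_eq_one_iff_left hp.ne_zero).mp hbx))
  have hpow : x ^ ((n * p : ℤ) - 1) = 1 := by
    rw [zpow_sub_one, zpow_mul, zpow_natCast, show (x ^ n) ^ p = x from hb, mul_inv_cancel]
  have hdvd : (p : ℤ) ∣ n * p - (n * p - 1) :=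
    dvd_sub (dvd_mul_left _ _)
      ((Int.natCast_dvd_natCast.mpr hx).trans (orderOf_dvd_iff_zpow_eq_one.mpr hpow))
  rw [sub_sub_cancel] at hdvd
  exact hp.not_dvd_one (by exact_mod_cast hdvd)

theorem not_isCyclic_quotient_range_powMonoidHom {p : ℕ} (hp : p.Prime) {x : G}
    (hx : p ∣ orderOf x) [IsCyclic (G ⧸ zpowers x)] [Infinite (G ⧸ zpowers x)] :
    ¬ IsCyclic (G ⧸ (powMonoidHom p : G →* G).range) := by
  intro hcyc
  have := IsCyclic.isMulTorsionFree_of_infinite (C := G ⧸ zpowers x)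
  have hexp : ∀ y : G ⧸ (powMonoidHom p : G →* G).range, y ^ p = 1 := by
    intro y
    induction y using QuotientGroup.induction_on with
    | _ a => rw [← QuotientGroup.mk_pow, QuotientGroup.eq_one_iff]; exact ⟨a, rfl⟩
  have hx1 : (x : G ⧸ (powMonoidHom p : G →* G).range) ≠ 1 :=
    (QuotientGroup.eq_one_iff x).not.mpr (notMem_range_powMonoidHom hp hx)
  obtain ⟨c, hc⟩ := IsCyclic.exists_forall_pow_ne_of_infinite (C := G ⧸ zpowers x) hp.ne_one
  induction c using QuotientGroup.induction_on with | _ a => ?_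
  obtain ⟨n, hn⟩ := mem_zpowers_iff.mp
    (IsCyclic.zpowers_eq_top_of_forall_pow_eq_one hp hexp hx1 ▸ mem_top (a : G ⧸ _))
  rw [← QuotientGroup.mk_zpow, QuotientGroup.eq] at hn
  obtain ⟨b, hb⟩ := hn
  apply hc b
  rw [← QuotientGroup.mk_pow, QuotientGroup.eq, show b ^ p = (x ^ n)⁻¹ * a from hb, mul_inv_rev,
    inv_inv, mul_comm a⁻¹, inv_mul_cancel_right]
  exact zpow_mem (mem_zpowers x) n

theorem isCyclic_of_isMulTorsionFree_of_finiteIndex [IsMulTorsionFree G] (H : Subgroup G)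
    [IsCyclic H] [H.FiniteIndex] : IsCyclic G :=
  isCyclic_of_injective ((powMonoidHom H.index).codRestrict H H.pow_index_mem)
    fun _ _ hab => pow_left_injective FiniteIndex.index_ne_zero (congrArg Subtype.val hab)

theorem finiteIndex_zpowers_of_forall_isCyclic
    (hq : ∀ (N : Subgroup G) [N.Normal], N ≠ ⊥ → IsCyclic (G ⧸ N)) {x : G} (hx : x ≠ 1) :
    (zpowers x).FiniteIndex := by
  -- `orderOf x = 0` if `x` has infinite order, and then `minFac` picks `2`
  have hp : (orderOf x).minFac.Prime := Nat.minFac_prime (orderOf_eq_one_iff.not.mpr hx)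
  have := hq (zpowers x) (zpowers_ne_bot.mpr hx)
  rw [finiteIndex_iff_finite_quotient, ← not_infinite_iff_finite]
  intro
  exact not_isCyclic_quotient_range_powMonoidHom hp (Nat.minFac_dvd _)
    (hq _ (range_powMonoidHom_ne_bot hp.ne_zero (zpowers x)))

theorem isMulTorsionFree_of_forall_isCyclic [Infinite G]
    (hq : ∀ (N : Subgroup G) [N.Normal], N ≠ ⊥ → IsCyclic (G ⧸ N)) :
    IsMulTorsionFree G := by
  refine .of_not_isOfFinOrder fun x hx hfin => ?_
  have := finiteIndex_zpowers_of_forall_isCyclic hq hx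
  have : Finite G :=
    ((zpowers x).finite_iff_finite_and_finiteIndex).mpr ⟨hfin.finite_zpowers.to_subtype, this⟩
  exact not_finite G

theorem isCyclic_of_forall_isCyclic_quotient [Infinite G]
    (hq : ∀ (N : Subgroup G) [N.Normal], N ≠ ⊥ → IsCyclic (G ⧸ N)) :
    IsCyclic G := by
  have := isMulTorsionFree_of_forall_isCyclic hq
  obtain ⟨x, hx⟩ := exists_ne (1 : G)
  have := finiteIndex_zpowers_of_forall_isCyclic hq hx
  exact isCyclic_of_isMulTorsionFree_of_finiteIndex (zpowers x)

end CommGroup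

/-- An infinite residually finite group all of whose proper quotients are cyclic is
itself cyclic. -/
theorem infinite_residually_finite_proper_quotients_cyclic (G : Type*) [Group G]
    [Infinite G]
    (hrf : ∀ x : G, x ≠ 1 → ∃ N : Subgroup G, N.Normal ∧ N.FiniteIndex ∧ x ∉ N)
    (h : ∀ (N : Subgroup G) [N.Normal], N ≠ ⊥ → IsCyclic (G ⧸ N)) :
    IsCyclic G := by
  let _ : CommGroup G :=
    { mul_comm := mul_comm_of_residuallyFinite hrf fun N _ hN => (h N hN).commGroup.mul_comm }
  exact isCyclic_of_forall_isCyclic_quotient h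
end

section
/- Let k ≥ 3 and let G be a group in which any two nontrivial elements have a common generating partner (the spread of G is at least 2). Define a relation R on k-tuples (Fin k → G) by: R t t' holds if there exist indices i ≠ j such that t' agrees with t at all positions other than i and t' i ∈ { (t i)·(t j), (t i)·(t j)⁻¹, (t j)·(t i), (t j)⁻¹·(t i) }. Then any two redundant generating k-tuples of G are connected by a finite sequence of such moves, i.e. they are related by the reflexive–transitive closure of R. -/
/-!
Fix nontrivial entries `x = t c` and `x' = t' c'` outside the redundant positions `a` of `t`
and `b` of `t'`, and a common generating partner `y` of `x` and `x'`. Since the entries of `t`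
other than `t a` generate `G`, the entry at `a` can be replaced by anything, in particular by `y`.
Once a tuple carries a generating pair `(u, v)` at two positions, all other entries can be
rewritten freely, and for `k ≥ 3` the pair itself can be moved to any two other positions.
So `t` reaches a tuple carrying `x, y, x'` at three distinct positions, and from there, by
moving the generating pair `(y, x')`, the tuple `t'` with `t' b` replaced by `y`.
-/

/-- The edge relation of the product replacement graph `Γ_k(G)`: one entry of the
tuple is multiplied (on the left or right) by another entry or its inverse. -/
def PRMove {G : Type*} [Group G] {k : ℕ} (t t' : Fin k → G) : Prop :=
  ∃ i j : Fin k, i ≠ j ∧ (∀ l : Fin k, l ≠ i → t' l = t l) ∧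
    (t' i = t i * t j ∨ t' i = t i * (t j)⁻¹ ∨ t' i = t j * t i ∨ t' i = (t j)⁻¹ * t i)

namespace PRMove

open Function Relation

variable {G : Type*} [Group G] {k : ℕ}

theorem symm {t t' : Fin k → G} : PRMove t t' → PRMove t' t := by
  rintro ⟨i, j, hij, hoff, hmove⟩
  have hj : t' j = t j := hoff j hij.symm
  refine ⟨i, j, hij, fun l hl => (hoff l hl).symm, ?_⟩
  rcases hmove with h | h | h | h <;> rw [hj, h]
  · exact Or.inr (Or.inl (by group))
  · exact Or.inl (by group)
  · exact Or.inr (Or.inr (Or.inr (by group)))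
  · exact Or.inr (Or.inr (Or.inl (by group)))

instance : Std.Symm (@PRMove G _ k) := ⟨fun _ _ => symm⟩

theorem reflTransGen_symm {t t' : Fin k → G} (h : ReflTransGen PRMove t t') :
    ReflTransGen PRMove t' t :=
  ReflTransGen.stdSymm.symm _ _ h

theorem reflTransGen_update_mul {t : Fin k → G} {i : Fin k} {g : G}
    (hg : g ∈ Subgroup.closure (t '' {i}ᶜ)) :
    ReflTransGen PRMove t (update t i (t i * g)) := by
  induction hg using Subgroup.closure_induction_right with
  | one => simpa using ReflTransGen.refl
  | mul_right g _ x hx ih =>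
    obtain ⟨j, hji, rfl⟩ := hx
    refine ih.tail ⟨i, j, Ne.symm hji, fun l hl => by simp [update_of_ne hl], Or.inl ?_⟩
    simp [update_of_ne hji, mul_assoc]
  | mul_inv_cancel g _ x hx ih =>
    obtain ⟨j, hji, rfl⟩ := hx
    refine ih.tail ⟨i, j, Ne.symm hji, fun l hl => by simp [update_of_ne hl], Or.inr (Or.inl ?_)⟩
    simp [update_of_ne hji, mul_assoc]

theorem reflTransGen_update {t : Fin k → G} {i : Fin k}
    (ht : Subgroup.closure (t '' {i}ᶜ) = ⊤) (g : G) :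
    ReflTransGen PRMove t (update t i g) := by
  have h := reflTransGen_update_mul (g := (t i)⁻¹ * g) (ht ▸ Subgroup.mem_top _)
  rwa [mul_inv_cancel_left] at h

theorem reflTransGen_update_of_closure_pair {t : Fin k → G} {p q d : Fin k}
    (hdp : d ≠ p) (hdq : d ≠ q) (ht : Subgroup.closure {t p, t q} = ⊤) (g : G) :
    ReflTransGen PRMove t (update t d g) := by
  refine reflTransGen_update (eq_top_iff.mpr (ht ▸ Subgroup.closure_mono ?_)) g
  rintro _ (rfl | rfl)
  exacts [⟨p, hdp.symm, rfl⟩, ⟨q, hdq.symm, rfl⟩]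

theorem reflTransGen_of_closure_pair {u v : G} (huv : Subgroup.closure {u, v} = ⊤)
    {p q : Fin k} (hpq : p ≠ q) {s s' : Fin k → G}
    (hsp : s p = u) (hsq : s q = v) (hs'p : s' p = u) (hs'q : s' q = v) :
    ReflTransGen PRMove s s' := by
  classical
  suffices h : ∀ S : Finset (Fin k), ReflTransGen PRMove s (S.piecewise s' s) by
    simpa using h Finset.univ
  intro S
  induction S using Finset.induction_on with
  | empty => simpa using ReflTransGen.refl
  | insert d S _ ih =>
    rw [Finset.piecewise_insert]
    refine ih.trans ?_
    set w := S.piecewise s' s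
    have hw : ∀ l, s l = s' l → w l = s' l := fun l hl => by
      by_cases h : l ∈ S <;> simp [w, h, hl]
    have hwp : w p = u := (hw p (hsp.trans hs'p.symm)).trans hs'p
    have hwq : w q = v := (hw q (hsq.trans hs'q.symm)).trans hs'q
    by_cases hd : d = p ∨ d = q
    · have hwd : w d = s' d := by
        rcases hd with rfl | rfl
        exacts [hw d (hsp.trans hs'p.symm), hw d (hsq.trans hs'q.symm)]
      simpa [← hwd] using ReflTransGen.refl
    · push Not at hd
      exact reflTransGen_update_of_closure_pair hd.1 hd.2 (by rwa [hwp, hwq]) _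

theorem reflTransGen_of_closure_pair_of_three_le (hk : 3 ≤ k) {u v : G} (huv : Subgroup.closure {u, v} = ⊤)
    {p q p' q' : Fin k} (hpq : p ≠ q) (hpq' : p' ≠ q') {s s' : Fin k → G}
    (hsp : s p = u) (hsq : s q = v) (hs'p : s' p' = u) (hs'q : s' q' = v) :
    ReflTransGen PRMove s s' := by
  -- The pair travels along the positions `(p, q) → (r, q) → (r, q') → (p', q')`.
  obtain ⟨r, hrq, hrq'⟩ := Fin.exists_ne_and_ne_of_two_lt q q' (by omega)
  let e : Fin k → G := update (fun _ => v) r u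
  let f (j : Fin k) : Fin k → G := update (fun _ => u) j v
  have he : ∀ j, j ≠ r → e r = u ∧ e j = v := fun j hj => by simp [e, hj]
  have hf : ∀ i j, i ≠ j → f j i = u ∧ f j j = v := fun i j hij => by simp [f, hij]
  calc ReflTransGen PRMove s (f q) := by
        exact reflTransGen_of_closure_pair huv hpq hsp hsq (hf p q hpq).1 (hf p q hpq).2
    ReflTransGen PRMove _ e := by
        exact reflTransGen_of_closure_pair huv hrq (hf r q hrq).1 (hf r q hrq).2
          (he q hrq.symm).1 (he q hrq.symm).2
    ReflTransGen PRMove _ (f q') := by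
        exact reflTransGen_of_closure_pair huv hrq' (he q' hrq'.symm).1 (he q' hrq'.symm).2
          (hf r q' hrq').1 (hf r q' hrq').2
    ReflTransGen PRMove _ s' := by
        exact reflTransGen_of_closure_pair huv hpq' (hf p' q' hpq').1 (hf p' q' hpq').2 hs'p hs'q

end PRMove

theorem Subgroup.exists_ne_and_ne_one_of_closure_image_compl {G ι : Type*} [Group G]
    [Nontrivial G] {t : ι → G} {i : ι} (ht : Subgroup.closure (t '' {i}ᶜ) = ⊤) :
    ∃ c, c ≠ i ∧ t c ≠ 1 := by
  by_contra! h
  have hbot : Subgroup.closure (t '' {i}ᶜ) = ⊥ := by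
    rw [Subgroup.closure_eq_bot_iff]
    rintro _ ⟨c, hc, rfl⟩
    exact h c hc
  exact bot_ne_top (hbot ▸ ht)

open Function Relation PRMove in
theorem redundant_tuples_connected_general (G : Type*) [Group G] (k : ℕ) (hk : 3 ≤ k)
    (hspread : ∀ x₁ x₂ : G, x₁ ≠ 1 → x₂ ≠ 1 →
      ∃ y : G, Subgroup.closure {x₁, y} = ⊤ ∧ Subgroup.closure {x₂, y} = ⊤)
    (t t' : Fin k → G)
    (hred : ∃ i : Fin k, Subgroup.closure (t '' {i}ᶜ) = ⊤)
    (hred' : ∃ i : Fin k, Subgroup.closure (t' '' {i}ᶜ) = ⊤) :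
    Relation.ReflTransGen PRMove t t' := by
  rcases subsingleton_or_nontrivial G with hG | hG
  · exact Subsingleton.elim t t' ▸ ReflTransGen.refl
  obtain ⟨a, ha⟩ := hred
  obtain ⟨b, hb⟩ := hred'
  obtain ⟨c, hca, hc⟩ := Subgroup.exists_ne_and_ne_one_of_closure_image_compl ha
  obtain ⟨c', hc'b, hc'⟩ := Subgroup.exists_ne_and_ne_one_of_closure_image_compl hb
  obtain ⟨y, hxy, hx'y⟩ := hspread (t c) (t' c') hc hc'
  have hyx' : Subgroup.closure {y, t' c'} = ⊤ := by rwa [Set.pair_comm]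
  obtain ⟨r, hrc, hra⟩ := Fin.exists_ne_and_ne_of_two_lt c a (by omega)
  let s := update t a y
  let w := update s r (t' c')
  calc ReflTransGen PRMove t s := by
        exact reflTransGen_update ha y
    ReflTransGen PRMove _ w := by
        exact reflTransGen_update_of_closure_pair hrc hra (by simpa [s, hca]) _
    ReflTransGen PRMove _ (update t' b y) := by
        exact reflTransGen_of_closure_pair_of_three_le hk hyx' hra.symm hc'b.symm
          (by simp [w, s, hra.symm]) (by simp [w]) (by simp) (by simp [hc'b])
    ReflTransGen PRMove _ t' := by
        exact reflTransGen_symm (reflTransGen_update hb y)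

/-- Evans: if `k ≥ 3` and any two nontrivial elements of `G` have a common
generating partner (spread ≥ 2), then any two redundant generating `k`-tuples of
`G` are connected in the product replacement graph `Γ_k(G)`. -/
theorem redundant_tuples_connected (G : Type*) [Group G] (k : ℕ) (hk : 3 ≤ k)
    (hspread : ∀ x₁ x₂ : G, x₁ ≠ 1 → x₂ ≠ 1 →
      ∃ y : G, Subgroup.closure {x₁, y} = ⊤ ∧ Subgroup.closure {x₂, y} = ⊤)
    (t t' : Fin k → G)
    (ht : Subgroup.closure (Set.range t) = ⊤)
    (ht' : Subgroup.closure (Set.range t') = ⊤)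
    (hred : ∃ i : Fin k, Subgroup.closure (t '' {i}ᶜ) = ⊤)
    (hred' : ∃ i : Fin k, Subgroup.closure (t' '' {i}ᶜ) = ⊤) :
    Relation.ReflTransGen PRMove t t' :=
  redundant_tuples_connected_general G k hk hspread t t' hred hred'
end
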